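/- Assume φ : [0,∞) → ℝ⁺ is twice continuously differentiable such that Δφ > 0 and (Δφ(z))^{−1/2} ≍ τ(z), where τ is a radial positive differentiable function on ℂ decreasing to 0 as |z| → ∞ with τ'(r) → 0 as r → ∞, and let δ > 0 be sufficiently small. Then there exists r₀ > 0 such that φ'(|a|) ≍ φ'(|z|) for all z ∈ D(a, δτ(a)) and all a ∈ ℂ with |a| > r₀, with comparison constants independent of a and z. Moreover 1 + φ'(|a|) ≍ 1 + φ'(|z|) for all z ∈ D(a, δτ(a)) and all a ∈ ℂ. -/

import Mathlib

open MeasureTheory Filter Metric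
open scoped ENNReal

noncomputable section

/-- The Laplacian of a radial function `z ↦ φ (|z|)`, expressed in the radius `r`. -/
def lapR (φ : ℝ → ℝ) (r : ℝ) : ℝ := deriv (deriv φ) r + deriv φ r / r

/-- The quantity `∫_ℂ |f(z)|^p e^{-p φ(|z|)} dm(z)`, as a lower Lebesgue integral. -/
def fockLInt (φ : ℝ → ℝ) (p : ℝ) (f : ℂ → ℂ) : ℝ≥0∞ :=
  ∫⁻ z : ℂ, ENNReal.ofReal (‖f z‖ ^ p * Real.exp (-(p * φ (‖z‖))))

/-- Membership in the weighted Fock space `F^φ_p`: `f` is entire and has finite `F^φ_p` norm. -/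
def MemFock (φ : ℝ → ℝ) (p : ℝ) (f : ℂ → ℂ) : Prop :=
  Differentiable ℂ f ∧ fockLInt φ p f < ⊤

/-- The class `𝓘` of rapidly increasing radial weights `φ`, with associated function `τ`. -/
structure ClassI (φ τ : ℝ → ℝ) : Prop where
  φ_pos : ∀ r, 0 ≤ r → 0 < φ r
  φ_smooth : ContDiff ℝ 2 φ
  lap_pos : ∀ r, 0 < r → 0 < lapR φ r
  τ_pos : ∀ r, 0 ≤ r → 0 < τ r
  τ_diff : Differentiable ℝ τ
  τ_anti : ∀ r s, 0 ≤ r → r ≤ s → τ s ≤ τ r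
  τ_lim : Tendsto τ atTop (nhds 0)
  τ_deriv_lim : Tendsto (deriv τ) atTop (nhds 0)
  τ_one : ∃ c, 0 < c ∧ ∀ r, 0 ≤ r → r < 1 → c⁻¹ ≤ τ r ∧ τ r ≤ c
  τ_lap : ∃ c, 0 < c ∧ ∀ r, 1 ≤ r → c⁻¹ ≤ τ r ^ 2 * lapR φ r ∧ τ r ^ 2 * lapR φ r ≤ c
  extra : (∃ C, 0 < C ∧ ∃ R : ℝ, ∀ r s, R ≤ r → r ≤ s → τ r * r ^ C ≤ τ s * s ^ C) ∨
      Tendsto (fun r => deriv τ r * Real.log (1 / τ r)) atTop (nhds 0)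

/-- The integral operator `T_g f (z) = ∫_0^z f(ζ) g'(ζ) dζ` (integral along the segment). -/
def Tg (g f : ℂ → ℂ) (z : ℂ) : ℂ := z * ∫ t in (0:ℝ)..1, f (t • z) * deriv g (t • z)

/-- The integral mean `M_q(r,f)` (with `M_∞(r,f) = max_{|z|=r} |f(z)|`). -/
def circMean (q : ℝ≥0∞) (f : ℂ → ℂ) (r : ℝ) : ℝ :=
  if q = ⊤ then ⨆ t : ℝ, ‖f ((r : ℂ) * Complex.exp ((t : ℂ) * Complex.I))‖
  else ((2 * Real.pi)⁻¹ * ∫ t in (-Real.pi)..Real.pi,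
      ‖f ((r : ℂ) * Complex.exp ((t : ℂ) * Complex.I))‖ ^ q.toReal) ^ (1 / q.toReal)

/-- The `p`-distortion function `ψ_{p,φ}(r) = (∫_r^∞ s e^{-pφ(s)} ds) / ((1+r) e^{-pφ(r)})`. -/
def distortion (φ : ℝ → ℝ) (p r : ℝ) : ℝ :=
  (∫ s in Set.Ioi r, s * Real.exp (-(p * φ s))) / ((1 + r) * Real.exp (-(p * φ r)))

/-! Put `g(r) = r φ'(r)`, so that `g' = r Δφ ≍ r / τ(r)²`. Since `τ' → 0`, for large `r` the
scale `τ` changes by at most a factor `2` on `[r - τ(r), r + τ(r)]`, and the mean value theorem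
gives both `g(r) ≥ g(r) - g(r - τ(r)) ≳ r / τ(r)` and `|g(s) - g(r)| ≲ r / τ(r)` for
`|s - r| ≤ τ(r)`. Hence `g(s) ≍ g(r)`, i.e. `φ'(s) ≍ φ'(r)`. On bounded radii `φ'` is nonnegative
(`g` increases from `g(0) = 0`) and bounded, which gives the statement for `1 + φ'`. -/

section RadialWeight

variable {φ τ : ℝ → ℝ} {c R r s : ℝ}

theorem hasDerivAt_mul_deriv (hφ : ContDiff ℝ 2 φ) {t : ℝ} (ht : t ≠ 0) :
    HasDerivAt (fun s => s * deriv φ s) (t * lapR φ t) t := by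
  have hφ' : Differentiable ℝ (deriv φ) :=
    (contDiff_succ_iff_deriv.mp (hφ : ContDiff ℝ (1 + 1) φ)).2.2.differentiable one_ne_zero
  refine ((hasDerivAt_id t).mul (hφ' t).hasDerivAt).congr_deriv ?_
  simp only [lapR, id]
  field_simp
  ring

theorem continuous_mul_deriv (hφ : ContDiff ℝ 2 φ) : Continuous fun s => s * deriv φ s :=
  continuous_id.mul (hφ.continuous_deriv one_le_two)

theorem deriv_nonneg_of_lapR_pos (hφ : ContDiff ℝ 2 φ) (hlap : ∀ r, 0 < r → 0 < lapR φ r)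
    {t : ℝ} (ht : 0 ≤ t) : 0 ≤ deriv φ t := by
  have hmono : MonotoneOn (fun s => s * deriv φ s) (Set.Ici 0) := by
    refine monotoneOn_of_deriv_nonneg (convex_Ici 0) (continuous_mul_deriv hφ).continuousOn
      (fun x hx => ?_) (fun x hx => ?_)
    all_goals rw [interior_Ici] at hx
    · exact (hasDerivAt_mul_deriv hφ hx.ne').differentiableAt.differentiableWithinAt
    · rw [(hasDerivAt_mul_deriv hφ hx.ne').deriv]
      exact (mul_pos hx (hlap x hx)).le
  have hpos : Set.Ioi 0 ⊆ {t | 0 ≤ deriv φ t} := fun x hx =>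
    nonneg_of_mul_nonneg_right
      (by simpa using hmono (Set.mem_Ici.2 le_rfl) (Set.mem_Ici.2 (le_of_lt hx)) (le_of_lt hx)) hx
  have hclosed : IsClosed {t | 0 ≤ deriv φ t} :=
    isClosed_le continuous_const (hφ.continuous_deriv one_le_two)
  exact hclosed.closure_subset_iff.2 hpos (by rwa [closure_Ioi])

def ScaleComparableAt (τ : ℝ → ℝ) (r : ℝ) : Prop :=
  ∀ s ∈ closedBall r (τ r), r / 2 ≤ s ∧ s ≤ 2 * r ∧ τ r / 2 ≤ τ s ∧ τ s ≤ 2 * τ r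

theorem ScaleComparableAt.pos_of_mem (h : ScaleComparableAt τ r) (hr : 0 < r)
    (hs : s ∈ closedBall r (τ r)) : 0 < s := by
  linarith [(h s hs).1]

theorem exists_scale_comparable (hτpos : ∀ r, 0 ≤ r → 0 < τ r) (hτdiff : Differentiable ℝ τ)
    (hτanti : ∀ r s, 0 ≤ r → r ≤ s → τ s ≤ τ r) (hτ'lim : Tendsto (deriv τ) atTop (nhds 0)) :
    ∃ R, 0 < R ∧ ∀ r, R ≤ r → ScaleComparableAt τ r := by
  obtain ⟨R₀, hR₀⟩ : ∃ R₀, ∀ x, R₀ ≤ x → ‖deriv τ x‖ ≤ 1 / 2 :=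
    eventually_atTop.1 (hτ'lim.norm.eventually (eventually_le_nhds (by norm_num)))
  have hτ0 := hτpos 0 le_rfl
  refine ⟨max R₀ 0 + 2 * τ 0, by positivity, fun r hr s hs => ?_⟩
  have hR₀r := le_max_left R₀ 0
  have hmax0 := le_max_right R₀ 0
  have hr0 : 0 ≤ r := by linarith
  have hτr : τ r ≤ τ 0 := hτanti 0 r le_rfl hr0
  have hτr0 := hτpos r hr0
  have hsr : |s - r| ≤ τ r := by rwa [mem_closedBall, Real.dist_eq] at hs
  obtain ⟨hs₁, hs₂⟩ := abs_le.1 hsr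
  have hlip := (convex_Ici R₀).norm_image_sub_le_of_norm_deriv_le (fun x _ => hτdiff x)
    (fun x hx => hR₀ x hx) (Set.mem_Ici.2 (by linarith) : r ∈ Set.Ici R₀)
    (Set.mem_Ici.2 (by linarith) : s ∈ Set.Ici R₀)
  rw [Real.norm_eq_abs, Real.norm_eq_abs, abs_le] at hlip
  refine ⟨by linarith, by linarith, ?_, ?_⟩ <;> nlinarith [abs_nonneg (s - r)]

theorem deriv_mul_deriv_mem_Icc (hφ : ContDiff ℝ 2 φ) (hc₀ : 0 < c)
    (hc : ∀ r, 0 < r → c⁻¹ ≤ τ r ^ 2 * lapR φ r ∧ τ r ^ 2 * lapR φ r ≤ c)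
    (hτr : 0 < τ r) (hr : 0 < r) (hnear : ScaleComparableAt τ r) (hs : s ∈ closedBall r (τ r)) :
    c⁻¹ * r / (8 * τ r ^ 2) ≤ deriv (fun t => t * deriv φ t) s ∧
      deriv (fun t => t * deriv φ t) s ≤ 8 * c * r / τ r ^ 2 := by
  obtain ⟨hs₁, hs₂, hτs₁, hτs₂⟩ := hnear s hs
  have hs0 := hnear.pos_of_mem hr hs
  have hτs0 : 0 < τ s := by linarith
  have hlap₁ : c⁻¹ / τ s ^ 2 ≤ lapR φ s := by
    rw [div_le_iff₀' (by positivity)]; exact (hc s hs0).1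
  have hlap₂ : lapR φ s ≤ c / τ s ^ 2 := by
    rw [le_div_iff₀' (by positivity)]; exact (hc s hs0).2
  rw [(hasDerivAt_mul_deriv hφ hs0.ne').deriv]
  constructor
  · calc c⁻¹ * r / (8 * τ r ^ 2) = r / 2 * (c⁻¹ / (2 * τ r) ^ 2) := by field_simp; ring
      _ ≤ s * (c⁻¹ / τ s ^ 2) := by gcongr
      _ ≤ s * lapR φ s := by gcongr
  · calc s * lapR φ s ≤ s * (c / τ s ^ 2) := by gcongr
      _ ≤ 2 * r * (c / (τ r / 2) ^ 2) := by gcongr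
      _ = 8 * c * r / τ r ^ 2 := by field_simp; ring

theorem div_le_mul_deriv (hφ : ContDiff ℝ 2 φ) (hlap : ∀ r, 0 < r → 0 < lapR φ r) (hc₀ : 0 < c)
    (hc : ∀ r, 0 < r → c⁻¹ ≤ τ r ^ 2 * lapR φ r ∧ τ r ^ 2 * lapR φ r ≤ c)
    (hτr : 0 < τ r) (hr : 0 < r) (hnear : ScaleComparableAt τ r) :
    c⁻¹ * r / (8 * τ r) ≤ r * deriv φ r := by
  have hpos : ∀ s ∈ closedBall r (τ r), 0 < s := fun s hs => hnear.pos_of_mem hr hs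
  have hleft : r - τ r ∈ closedBall r (τ r) := by
    rw [mem_closedBall, Real.dist_eq, sub_sub_cancel_left, abs_neg, abs_of_pos hτr]
  have hmvt := (convex_closedBall r (τ r)).mul_sub_le_image_sub_of_le_deriv
    (continuous_mul_deriv hφ).continuousOn
    (fun s hs => (hasDerivAt_mul_deriv hφ (hpos s (interior_subset hs)).ne').differentiableAt
      |>.differentiableWithinAt)
    (fun s hs => (deriv_mul_deriv_mem_Icc hφ hc₀ hc hτr hr hnear (interior_subset hs)).1)
    (r - τ r) hleft r (mem_closedBall_self hτr.le) (by linarith)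
  have hleft_nonneg : 0 ≤ (r - τ r) * deriv φ (r - τ r) :=
    mul_nonneg (hpos _ hleft).le (deriv_nonneg_of_lapR_pos hφ hlap (hpos _ hleft).le)
  calc c⁻¹ * r / (8 * τ r) = c⁻¹ * r / (8 * τ r ^ 2) * (r - (r - τ r)) := by field_simp; ring
    _ ≤ r * deriv φ r - (r - τ r) * deriv φ (r - τ r) := hmvt
    _ ≤ r * deriv φ r := by linarith

theorem abs_mul_deriv_sub_le (hφ : ContDiff ℝ 2 φ) (hc₀ : 0 < c)
    (hc : ∀ r, 0 < r → c⁻¹ ≤ τ r ^ 2 * lapR φ r ∧ τ r ^ 2 * lapR φ r ≤ c)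
    (hτr : 0 < τ r) (hr : 0 < r) (hnear : ScaleComparableAt τ r)
    (hs : s ∈ closedBall r (τ r)) :
    |s * deriv φ s - r * deriv φ r| ≤ 8 * c * r / τ r := by
  have hpos : ∀ s ∈ closedBall r (τ r), 0 < s := fun s hs => hnear.pos_of_mem hr hs
  have hmvt := (convex_closedBall r (τ r)).norm_image_sub_le_of_norm_deriv_le
    (f := fun t => t * deriv φ t)
    (fun t ht => (hasDerivAt_mul_deriv hφ (hpos t ht).ne').differentiableAt)
    (fun t ht => by
      obtain ⟨h₁, h₂⟩ := deriv_mul_deriv_mem_Icc hφ hc₀ hc hτr hr hnear ht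
      have : 0 ≤ c⁻¹ * r / (8 * τ r ^ 2) := by positivity
      exact Real.norm_eq_abs _ ▸ abs_le.2 ⟨by linarith, h₂⟩)
    (mem_closedBall_self hτr.le) hs
  have hsr : ‖s - r‖ ≤ τ r := by rwa [← dist_eq_norm, ← mem_closedBall]
  calc |s * deriv φ s - r * deriv φ r| ≤ 8 * c * r / τ r ^ 2 * ‖s - r‖ := hmvt
    _ ≤ 8 * c * r / τ r ^ 2 * τ r := by gcongr
    _ = 8 * c * r / τ r := by field_simp

theorem deriv_le_mul_deriv_of_mem_closedBall (hφ : ContDiff ℝ 2 φ) (hlap : ∀ r, 0 < r → 0 < lapR φ r)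
    (hc₀ : 0 < c) (hc : ∀ r, 0 < r → c⁻¹ ≤ τ r ^ 2 * lapR φ r ∧ τ r ^ 2 * lapR φ r ≤ c)
    (hτpos : ∀ r, 0 ≤ r → 0 < τ r) (hR₀ : 0 < R)
    (hR : ∀ r, R ≤ r → ScaleComparableAt τ r)
    (hr : 2 * R ≤ r) (hs : s ∈ closedBall r (τ r)) :
    deriv φ r ≤ 2 * (1 + 256 * c ^ 2) * deriv φ s ∧
      deriv φ s ≤ 2 * (1 + 256 * c ^ 2) * deriv φ r := by
  obtain ⟨hs₁, hs₂, -, hτs₂⟩ := hR r (by linarith) s hs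
  have hr0 : 0 < r := by linarith
  have hs0 : 0 < s := by linarith
  have hτr := hτpos r hr0.le
  have hτs := hτpos s hs0.le
  set L := c⁻¹ * r / (8 * τ r)
  have hgr : L ≤ r * deriv φ r := div_le_mul_deriv hφ hlap hc₀ hc hτr hr0 (hR r (by linarith))
  have hgs : L / 4 ≤ s * deriv φ s := by
    calc L / 4 = c⁻¹ * (r / 2) / (8 * (2 * τ r)) := by ring
      _ ≤ c⁻¹ * s / (8 * τ s) := by gcongr
      _ ≤ s * deriv φ s := div_le_mul_deriv hφ hlap hc₀ hc hτs hs0 (hR s (by linarith))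
  have hinc : |s * deriv φ s - r * deriv φ r| ≤ 64 * c ^ 2 * L := by
    convert abs_mul_deriv_sub_le hφ hc₀ hc hτr hr0 (hR r (by linarith)) hs using 1
    simp only [L]
    field_simp
    ring
  obtain ⟨hinc₁, hinc₂⟩ := abs_le.1 hinc
  have hA := deriv_nonneg_of_lapR_pos hφ hlap hr0.le
  have hB := deriv_nonneg_of_lapR_pos hφ hlap hs0.le
  have hc2 : 0 ≤ 64 * c ^ 2 := by positivity
  have hup : s * deriv φ s ≤ (1 + 256 * c ^ 2) * (r * deriv φ r) := by
    nlinarith [mul_le_mul_of_nonneg_left hgr hc2]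
  have hlow : r * deriv φ r ≤ (1 + 256 * c ^ 2) * (s * deriv φ s) := by
    nlinarith [mul_le_mul_of_nonneg_left hgs hc2]
  constructor
  · refine le_of_mul_le_mul_left ?_ hr0
    nlinarith [mul_le_mul_of_nonneg_left hs₂ (mul_nonneg hc2 hB)]
  · refine le_of_mul_le_mul_left ?_ hs0
    nlinarith [mul_le_mul_of_nonneg_left hs₁ (mul_nonneg hc2 hA)]

end RadialWeight

theorem one_add_le_max_mul {K M x y : ℝ} (hK : 1 ≤ K) (hy : 0 ≤ y) (h : x ≤ K * y ∨ x ≤ M) :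
    1 + x ≤ max K (1 + M) * (1 + y) := by
  rcases h with h | h
  · calc 1 + x ≤ K * (1 + y) := by linarith
      _ ≤ max K (1 + M) * (1 + y) := by gcongr; exact le_max_left _ _
  · calc 1 + x ≤ max K (1 + M) := le_max_of_le_right (by linarith)
      _ ≤ max K (1 + M) * (1 + y) :=
        le_mul_of_one_le_right (by linarith [le_max_left K (1 + M)]) (by linarith)

theorem stmt17_general (φ τ : ℝ → ℝ)
    (hφ : ContDiff ℝ 2 φ)
    (hlap : ∀ r : ℝ, 0 < r → 0 < lapR φ r)
    (hτpos : ∀ r : ℝ, 0 ≤ r → 0 < τ r) (hτdiff : Differentiable ℝ τ)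
    (hτanti : ∀ r s : ℝ, 0 ≤ r → r ≤ s → τ s ≤ τ r)
    (hτ'lim : Tendsto (deriv τ) atTop (nhds 0))
    (hcomp : ∃ c : ℝ, 0 < c ∧ ∀ r : ℝ, 0 < r →
      c⁻¹ ≤ τ r ^ 2 * lapR φ r ∧ τ r ^ 2 * lapR φ r ≤ c) :
    ∃ δ₀ : ℝ, 0 < δ₀ ∧ ∀ δ : ℝ, 0 < δ → δ ≤ δ₀ →
      (∃ r₀ : ℝ, 0 < r₀ ∧ ∃ c : ℝ, 0 < c ∧ ∀ a z : ℂ, r₀ < ‖a‖ →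
        z ∈ ball a (δ * τ (‖a‖)) →
          c⁻¹ * deriv φ (‖a‖) ≤ deriv φ (‖z‖) ∧
            deriv φ (‖z‖) ≤ c * deriv φ (‖a‖)) ∧
      (∃ c : ℝ, 0 < c ∧ ∀ a z : ℂ, z ∈ ball a (δ * τ (‖a‖)) →
          c⁻¹ * (1 + deriv φ (‖a‖)) ≤ 1 + deriv φ (‖z‖) ∧
            1 + deriv φ (‖z‖) ≤ c * (1 + deriv φ (‖a‖))) := by
  obtain ⟨c, hc₀, hc⟩ := hcomp
  obtain ⟨R, hR₀, hR⟩ := exists_scale_comparable hτpos hτdiff hτanti hτ'lim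
  obtain ⟨M, hM⟩ := (isCompact_Icc (a := 0) (b := 2 * R + τ 0)).exists_bound_of_continuousOn
    (hφ.continuous_deriv one_le_two).continuousOn
  set K := 2 * (1 + 256 * c ^ 2)
  have hK : 1 ≤ K := by nlinarith [sq_nonneg c]
  have hdisc : ∀ δ ≤ 1, ∀ a z : ℂ, z ∈ ball a (δ * τ ‖a‖) → ‖z‖ ∈ closedBall ‖a‖ (τ ‖a‖) :=
    fun δ hδ a z hz => (dist_norm_norm_le z a).trans <| (mem_ball_iff_norm.1 hz).le.trans <|
      mul_le_of_le_one_left (hτpos _ (norm_nonneg a)).le hδ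
  have hsmall : ∀ a z : ℂ, ‖a‖ ≤ 2 * R → ‖z‖ ∈ closedBall ‖a‖ (τ ‖a‖) →
      deriv φ ‖a‖ ≤ M ∧ deriv φ ‖z‖ ≤ M := by
    intro a z ha hz
    have hz' : ‖z‖ ≤ ‖a‖ + τ ‖a‖ := by
      rw [mem_closedBall, Real.dist_eq, abs_le] at hz; linarith
    have hτa := hτanti 0 ‖a‖ le_rfl (norm_nonneg a)
    have hτa₀ := hτpos ‖a‖ (norm_nonneg a)
    exact ⟨(Real.le_norm_self _).trans (hM _ ⟨norm_nonneg a, by linarith⟩),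
      (Real.le_norm_self _).trans (hM _ ⟨norm_nonneg z, by linarith⟩)⟩
  refine ⟨1, one_pos, fun δ _ hδ => ⟨⟨2 * R, by positivity, K, by positivity,
    fun a z ha hz => ?_⟩, ⟨max K (1 + M), by positivity, fun a z hz => ?_⟩⟩⟩
  · obtain ⟨h₁, h₂⟩ := deriv_le_mul_deriv_of_mem_closedBall hφ hlap hc₀ hc hτpos hR₀ hR ha.le
      (hdisc δ hδ a z hz)
    exact ⟨(inv_mul_le_iff₀ (by positivity)).2 h₁, h₂⟩
  · have hcases : (deriv φ ‖a‖ ≤ K * deriv φ ‖z‖ ∧ deriv φ ‖z‖ ≤ K * deriv φ ‖a‖) ∨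
        (deriv φ ‖a‖ ≤ M ∧ deriv φ ‖z‖ ≤ M) := by
      rcases le_or_gt ‖a‖ (2 * R) with ha | ha
      · exact .inr (hsmall a z ha (hdisc δ hδ a z hz))
      · exact .inl (deriv_le_mul_deriv_of_mem_closedBall hφ hlap hc₀ hc hτpos hR₀ hR ha.le
          (hdisc δ hδ a z hz))
    have hA := deriv_nonneg_of_lapR_pos hφ hlap (norm_nonneg a)
    have hB := deriv_nonneg_of_lapR_pos hφ hlap (norm_nonneg z)
    exact ⟨(inv_mul_le_iff₀ (by positivity)).2
        (one_add_le_max_mul hK hB (hcases.imp And.left And.left)),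
      one_add_le_max_mul hK hA (hcases.imp And.right And.right)⟩

/-- Lemma 3.10: under the hypotheses on `φ` and `τ`, for each sufficiently small `δ > 0` there
is `r₀ > 0` such that `φ'(|a|) ≍ φ'(|z|)` for `z ∈ D(a, δτ(a))` and `|a| > r₀`, and moreover
`1 + φ'(|a|) ≍ 1 + φ'(|z|)` for `z ∈ D(a, δτ(a))` and all `a ∈ ℂ`. -/
theorem stmt17 (φ τ : ℝ → ℝ)
    (hφpos : ∀ r, 0 ≤ r → 0 < φ r) (hφ : ContDiff ℝ 2 φ)
    (hlap : ∀ r : ℝ, 0 < r → 0 < lapR φ r)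
    (hτpos : ∀ r : ℝ, 0 ≤ r → 0 < τ r) (hτdiff : Differentiable ℝ τ)
    (hτanti : ∀ r s : ℝ, 0 ≤ r → r ≤ s → τ s ≤ τ r)
    (hτlim : Tendsto τ atTop (nhds 0))
    (hτ'lim : Tendsto (deriv τ) atTop (nhds 0))
    (hcomp : ∃ c : ℝ, 0 < c ∧ ∀ r : ℝ, 0 < r →
      c⁻¹ ≤ τ r ^ 2 * lapR φ r ∧ τ r ^ 2 * lapR φ r ≤ c) :
    ∃ δ₀ : ℝ, 0 < δ₀ ∧ ∀ δ : ℝ, 0 < δ → δ ≤ δ₀ →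
      (∃ r₀ : ℝ, 0 < r₀ ∧ ∃ c : ℝ, 0 < c ∧ ∀ a z : ℂ, r₀ < ‖a‖ →
        z ∈ ball a (δ * τ (‖a‖)) →
          c⁻¹ * deriv φ (‖a‖) ≤ deriv φ (‖z‖) ∧
            deriv φ (‖z‖) ≤ c * deriv φ (‖a‖)) ∧
      (∃ c : ℝ, 0 < c ∧ ∀ a z : ℂ, z ∈ ball a (δ * τ (‖a‖)) →
          c⁻¹ * (1 + deriv φ (‖a‖)) ≤ 1 + deriv φ (‖z‖) ∧
            1 + deriv φ (‖z‖) ≤ c * (1 + deriv φ (‖a‖))) :=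
  stmt17_general φ τ hφ hlap hτpos hτdiff hτanti hτ'lim hcomp
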